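/- For all f, g ∈ F^N_0 = {f ∈ ℝ^N : f_0 = 0} (extended by the convention f_{−1} = f_N = 0), with (Df)_t = f_{t+1} + f_{t−1} for 0 ≤ t ≤ N−1, one has the identity (C^N D f, g)_{ℝ^N} = (A^N W^N f, W^N g)_{ℝ^N}, where A^N is the N×N Jacobi block of the coefficients. -/

import Mathlib

open scoped BigOperators
open Matrix

/-- Solution `u^f` of the semi-infinite dynamical system. -/
def solS (a b f : ℕ → ℝ) : ℕ → ℕ → ℝ
  | n, 0 => if n = 0 then f 0 else 0
  | n, 1 =>
      if n = 0 then f 1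
      else a n * solS a b f (n + 1) 0 + a (n - 1) * solS a b f (n - 1) 0
        + b n * solS a b f n 0
  | n, t + 2 =>
      if n = 0 then f (t + 2)
      else a n * solS a b f (n + 1) (t + 1) + a (n - 1) * solS a b f (n - 1) (t + 1)
        + b n * solS a b f n (t + 1) - solS a b f n t
  termination_by n t => t

/-- Extension of a finite control by zero. -/
def ctrl (T : ℕ) (f : Fin T → ℝ) : ℕ → ℝ := fun t => if h : t < T then f ⟨t, h⟩ else 0

/-- The control operator `W^T : ℝ^T → ℝ^T`, `f ↦ (u^f_{1,T},…,u^f_{T,T})`. -/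
def WFun (a b : ℕ → ℝ) (T : ℕ) (f : Fin T → ℝ) : Fin T → ℝ :=
  fun n => solS a b (ctrl T f) ((n : ℕ) + 1) T

/-- The control operator `W^T` as a matrix. -/
def WSemiMat (a b : ℕ → ℝ) (T : ℕ) : Matrix (Fin T) (Fin T) ℝ :=
  Matrix.of fun n j => WFun a b T (fun k => if k = j then 1 else 0) n

/-- Connecting operator `C^T = (W^T)ᵀ W^T`. -/
def CSemiMat (a b : ℕ → ℝ) (T : ℕ) : Matrix (Fin T) (Fin T) ℝ :=
  (WSemiMat a b T)ᵀ * WSemiMat a b T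

/-- The `N×N` Jacobi matrix `A^N` with diagonal `b_1,…,b_N`, off-diagonal `a_1,…,a_{N-1}`. -/
def jacobiMat (N : ℕ) (a b : ℕ → ℝ) : Matrix (Fin N) (Fin N) ℝ :=
  Matrix.of fun i j =>
    if (i : ℕ) = (j : ℕ) then b ((i : ℕ) + 1)
    else if (i : ℕ) + 1 = (j : ℕ) then a ((i : ℕ) + 1)
    else if (j : ℕ) + 1 = (i : ℕ) then a ((j : ℕ) + 1)
    else 0

/-- The operator `D : ℝ^N → ℝ^N`, `(Df)_t = f_{t+1} + f_{t-1}`, with the conventions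
`f_{-1} = f_N = 0`. -/
def Dop (N : ℕ) (f : Fin N → ℝ) : Fin N → ℝ :=
  fun t => (if h : (t : ℕ) + 1 < N then f ⟨(t : ℕ) + 1, h⟩ else 0)
    + (if h : 1 ≤ (t : ℕ) then f ⟨(t : ℕ) - 1, by omega⟩ else 0)

/-!
Since `f_0 = 0`, advancing or delaying the control by one step advances or delays the solution,
so by linearity `u^{Df}_{n,N} = u^f_{n,N+1} + u^f_{n,N-1}` (causality lets us replace `Df`, which
is cut off at `N`, by the uncut shifted sum). The equation of motion at time `N` turns the right
side into `(A^N W^N f)_{n-1}`, the boundary values `u^f_{0,N} = f_N = 0` and `u^f_{N+1,N} = 0`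
(finite speed of propagation) accounting for the truncation of the Jacobi matrix. Hence
`W^N D f = A^N W^N f`, and `C^N = (W^N)ᵀ W^N` gives the identity.
-/

/-- Time runs over `ℕ`, so `first_step` is the equation at `t = 0`, where `u_{n,-1} = 0`. -/
structure IsSolution (a b f : ℕ → ℝ) (u : ℕ → ℕ → ℝ) : Prop where
  boundary : ∀ t, u 0 t = f t
  initial : ∀ n, n ≠ 0 → u n 0 = 0
  first_step : ∀ n, n ≠ 0 →
    u n 1 = a n * u (n + 1) 0 + a (n - 1) * u (n - 1) 0 + b n * u n 0
  step : ∀ n t, n ≠ 0 →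
    u n (t + 2) = a n * u (n + 1) (t + 1) + a (n - 1) * u (n - 1) (t + 1)
      + b n * u n (t + 1) - u n t

namespace IsSolution

variable {a b f g : ℕ → ℝ} {u v : ℕ → ℕ → ℝ}

theorem zero : IsSolution a b 0 0 where
  boundary _ := rfl
  initial _ _ := rfl
  first_step _ _ := by simp
  step _ _ _ := by simp

theorem add (hu : IsSolution a b f u) (hv : IsSolution a b g v) :
    IsSolution a b (f + g) (u + v) where
  boundary t := by simp only [Pi.add_apply, hu.boundary, hv.boundary]
  initial n hn := by simp only [Pi.add_apply, hu.initial n hn, hv.initial n hn, add_zero]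
  first_step n hn := by
    simp only [Pi.add_apply, hu.first_step n hn, hv.first_step n hn]
    ring
  step n t hn := by
    simp only [Pi.add_apply, hu.step n t hn, hv.step n t hn]
    ring

theorem smul (hu : IsSolution a b f u) (c : ℝ) : IsSolution a b (c • f) (c • u) where
  boundary t := by simp only [Pi.smul_apply, hu.boundary]
  initial n hn := by simp only [Pi.smul_apply, hu.initial n hn, smul_zero]
  first_step n hn := by
    simp only [Pi.smul_apply, smul_eq_mul, hu.first_step n hn]
    ring
  step n t hn := by
    simp only [Pi.smul_apply, smul_eq_mul, hu.step n t hn]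
    ring

theorem sum {ι : Type*} (s : Finset ι) {F : ι → ℕ → ℝ} {U : ι → ℕ → ℕ → ℝ}
    (h : ∀ j ∈ s, IsSolution a b (F j) (U j)) :
    IsSolution a b (∑ j ∈ s, F j) (∑ j ∈ s, U j) := by
  simpa only [Prod.fst_sum, Prod.snd_sum] using
    Finset.sum_induction (fun j => (F j, U j)) (fun p => IsSolution a b p.1 p.2)
      (fun _ _ hp hq => hp.add hq) zero h

theorem eq_of_eq_before (hu : IsSolution a b f u) (hv : IsSolution a b g v) {n t : ℕ}
    (h : ∀ s, s + n ≤ t → f s = g s) : u n t = v n t := by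
  induction t using Nat.strong_induction_on generalizing n with
  | _ t ih =>
  rcases eq_or_ne n 0 with rfl | hn
  · rw [hu.boundary, hv.boundary]
    exact h t (by omega)
  have past : ∀ m t', t' < t → t' + n ≤ t + m → u m t' = v m t' :=
    fun m t' ht hle => ih t' ht fun s hs => h s (by omega)
  rcases t with _ | _ | t
  · rw [hu.initial n hn, hv.initial n hn]
  · rw [hu.first_step n hn, hv.first_step n hn, past (n + 1) 0 (by omega) (by omega),
      past (n - 1) 0 (by omega) (by omega), past n 0 (by omega) (by omega)]
  · rw [hu.step n t hn, hv.step n t hn, past (n + 1) (t + 1) (by omega) (by omega),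
      past (n - 1) (t + 1) (by omega) (by omega), past n (t + 1) (by omega) (by omega),
      past n t (by omega) (by omega)]

theorem eq_zero_of_lt (hu : IsSolution a b f u) {n t : ℕ} (h : t < n) : u n t = 0 :=
  hu.eq_of_eq_before zero fun s hs => by omega

theorem unique (hu : IsSolution a b f u) (hv : IsSolution a b f v) : u = v := by
  funext n t
  exact hu.eq_of_eq_before hv fun _ _ => rfl

end IsSolution

theorem isSolution_solS (a b f : ℕ → ℝ) : IsSolution a b f (solS a b f) where
  boundary t := by rcases t with _ | _ | t <;> rw [solS] <;> simp
  initial n hn := by rw [solS, if_neg hn]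
  first_step n hn := by conv_lhs => rw [solS, if_neg hn]
  step n t hn := by conv_lhs => rw [solS, if_neg hn]

theorem IsSolution.eq_solS {a b f : ℕ → ℝ} {u : ℕ → ℕ → ℝ} (hu : IsSolution a b f u) :
    u = solS a b f :=
  hu.unique (isSolution_solS a b f)

section TimeShift

variable {a b F : ℕ → ℝ}

theorem solS_initial_eq_zero (hF : F 0 = 0) (n : ℕ) : solS a b F n 0 = 0 := by
  rcases eq_or_ne n 0 with rfl | hn
  · rw [(isSolution_solS a b F).boundary, hF]
  · exact (isSolution_solS a b F).initial n hn

theorem isSolution_solS_advance (hF : F 0 = 0) :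
    IsSolution a b (fun s => F (s + 1)) (fun n t => solS a b F n (t + 1)) where
  boundary t := (isSolution_solS a b F).boundary (t + 1)
  initial n hn := by
    simp only [(isSolution_solS a b F).first_step n hn, solS_initial_eq_zero hF, mul_zero,
      add_zero]
  first_step n hn := by
    simpa only [solS_initial_eq_zero hF, sub_zero] using (isSolution_solS a b F).step n 0 hn
  step n t hn := (isSolution_solS a b F).step n (t + 1) hn

theorem isSolution_solS_delay (hF : F 0 = 0) :
    IsSolution a b (fun s => F (s - 1)) (fun n t => solS a b F n (t - 1)) where
  boundary t := (isSolution_solS a b F).boundary (t - 1)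
  initial n hn := (isSolution_solS a b F).initial n hn
  first_step n hn := by
    simp only [Nat.sub_self, zero_tsub, solS_initial_eq_zero hF, mul_zero, add_zero]
  step n t hn := by
    rcases t with _ | t
    · simpa only [solS_initial_eq_zero hF, sub_zero] using (isSolution_solS a b F).first_step n hn
    · exact (isSolution_solS a b F).step n t hn

/-- Here `s - 1` truncates at `s = 0`, where `F (0 - 1) = F 0 = 0` stands for `F(-1) = 0`. -/
theorem solS_advance_add_delay (hF : F 0 = 0) (n t : ℕ) :
    solS a b (fun s => F (s + 1) + F (s - 1)) n t = solS a b F n (t + 1) + solS a b F n (t - 1) :=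
  (congrFun₂ ((isSolution_solS_advance hF).add (isSolution_solS_delay hF)).eq_solS n t).symm

end TimeShift

theorem ctrl_eq_sum (T : ℕ) (x : Fin T → ℝ) :
    ctrl T x = ∑ j, x j • ctrl T (fun k => if k = j then 1 else 0) := by
  funext s
  by_cases hs : s < T <;> simp [ctrl, hs]

theorem WSemiMat_mulVec (a b : ℕ → ℝ) (T : ℕ) (x : Fin T → ℝ) :
    WSemiMat a b T *ᵥ x = WFun a b T x := by
  have hsol := IsSolution.sum Finset.univ fun j _ =>
    (isSolution_solS a b (ctrl T fun k => if k = j then 1 else 0)).smul (x j)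
  funext n
  simp only [WFun, ctrl_eq_sum T x, ← hsol.eq_solS, Finset.sum_apply, Pi.smul_apply, smul_eq_mul,
    mulVec, dotProduct, WSemiMat, of_apply, mul_comm]

theorem ctrl_Dop_of_lt {N : ℕ} {f : Fin N → ℝ} (hf : ctrl N f 0 = 0) {s : ℕ} (hs : s < N) :
    ctrl N (Dop N f) s = ctrl N f (s + 1) + ctrl N f (s - 1) := by
  rcases s with _ | s
  · simp [ctrl, Dop, hs, ← hf]
  · simp [ctrl, Dop, hs, Nat.lt_of_succ_lt hs]

theorem jacobiMat_mulVec_apply (N : ℕ) (a b w : ℕ → ℝ) (hw0 : w 0 = 0) (hwN : w (N + 1) = 0)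
    (n : Fin N) :
    (jacobiMat N a b *ᵥ fun i => w (i + 1)) n
      = a (n + 1) * w (n + 2) + a n * w n + b (n + 1) * w (n + 1) := by
  let E : ℕ → ℝ := fun j => (if j = n then b (n + 1) * w (n + 1) else 0)
    + (if j = n + 1 then a (n + 1) * w (n + 2) else 0) + (if j + 1 = n then a n * w n else 0)
  have entry (j : Fin N) : jacobiMat N a b n j * w (j + 1) = E j := by
    simp only [jacobiMat, of_apply, E]
    generalize (j : ℕ) = k
    generalize (n : ℕ) = m
    split_ifs <;> first | omega | (subst_vars; ring)
  have sum_below : ∑ j ∈ Finset.range N, (if j + 1 = n then a n * w n else 0) = a n * w n := by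
    obtain ⟨_ | m, hm⟩ := n
    · simp [hw0]
    · simp [Nat.lt_of_succ_lt hm]
  calc (jacobiMat N a b *ᵥ fun i => w (i + 1)) n = ∑ j : Fin N, E j :=
        Fintype.sum_congr _ _ entry
    _ = ∑ j ∈ Finset.range N, E j := Fin.sum_univ_eq_sum_range E N
    _ = _ := by
      simp only [E, Finset.sum_add_distrib, Finset.sum_ite_eq', Finset.mem_range, sum_below,
        n.isLt, if_true]
      split_ifs with hlt
      · ring
      · rw [show (n : ℕ) + 2 = N + 1 by omega, hwN]
        ring

theorem WFun_Dop (a b : ℕ → ℝ) {N : ℕ} {f : Fin N → ℝ} (hf : ctrl N f 0 = 0) :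
    WFun a b N (Dop N f) = jacobiMat N a b *ᵥ WFun a b N f := by
  funext n
  obtain ⟨M, rfl⟩ : ∃ M, N = M + 1 := Nat.exists_eq_add_one.mpr n.pos
  set u := solS a b (ctrl (M + 1) f)
  have hu : IsSolution a b (ctrl (M + 1) f) u := isSolution_solS a b _
  have hw0 : u 0 (M + 1) = 0 := by simp [hu.boundary, ctrl]
  calc WFun a b (M + 1) (Dop (M + 1) f) n
      = solS a b (fun s => ctrl (M + 1) f (s + 1) + ctrl (M + 1) f (s - 1)) (n + 1) (M + 1) :=
        (isSolution_solS a b _).eq_of_eq_before (isSolution_solS a b _) fun s hs =>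
          ctrl_Dop_of_lt hf (by omega)
    _ = u (n + 1) (M + 2) + u (n + 1) M := solS_advance_add_delay hf _ _
    _ = a (n + 1) * u (n + 2) (M + 1) + a n * u n (M + 1) + b (n + 1) * u (n + 1) (M + 1) := by
      rw [hu.step (n + 1) M (by omega), Nat.add_sub_cancel]
      ring
    _ = (jacobiMat (M + 1) a b *ᵥ WFun a b (M + 1) f) n :=
      (jacobiMat_mulVec_apply (M + 1) a b (fun m => u m (M + 1)) hw0
        (hu.eq_zero_of_lt (by omega)) n).symm

/-- for `f, g ∈ F^N_0`, `(C^N D f, g) = (A^N W^N f, W^N g)`. -/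
theorem connecting_operator_jacobi_identity
    (N : ℕ) (hN : 1 ≤ N) (a b : ℕ → ℝ)
    (f g : Fin N → ℝ)
    (hf : f ⟨0, by omega⟩ = 0) :
    dotProduct ((CSemiMat a b N).mulVec (Dop N f)) g
      = dotProduct ((jacobiMat N a b).mulVec (WFun a b N f)) (WFun a b N g) := by
  have hctrl : ctrl N f 0 = 0 := by rw [ctrl, dif_pos (show 0 < N from hN)]; exact hf
  rw [CSemiMat, ← mulVec_mulVec, dotProduct_comm, dotProduct_mulVec, vecMul_transpose,
    WSemiMat_mulVec, WSemiMat_mulVec, WFun_Dop a b hctrl, dotProduct_comm]
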